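/- For all integers m ≥ 1 and t ≥ 0, every vertex of the Koch network K_{m,t} of degree k has local clustering coefficient exactly 1/(k-1); that is, the number of edges among its k neighbors equals k/2, so that (k/2) divided by k(k-1)/2 equals 1/(k-1). -/

import Mathlib

/-- The triangles of the Koch network `K_{m,t}`: at step `t+1`, each old triangle survives and
each (triangle, corner, group) creates a new triangle. -/
def KochTri (m : ℕ) : ℕ → Type
  | 0 => Unit
  | t+1 => KochTri m t ⊕ (KochTri m t × Fin 3 × Fin m)

/-- The vertices of the Koch network `K_{m,t}`: at step `t+1`, each (triangle, corner, group)
creates two new vertices. -/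
def KochVertex (m : ℕ) : ℕ → Type
  | 0 => Fin 3
  | t+1 => KochVertex m t ⊕ (KochTri m t × Fin 3 × Fin m × Fin 2)

/-- The three corner vertices of each triangle. -/
def KochCorner (m : ℕ) : ∀ t, KochTri m t → Fin 3 → KochVertex m t
  | 0, _, i => i
  | t+1, Sum.inl τ, i => Sum.inl (KochCorner m t τ i)
  | t+1, Sum.inr (τ, c, g), i =>
      ![Sum.inl (KochCorner m t τ c), Sum.inr (τ, c, g, 0), Sum.inr (τ, c, g, 1)] i

instance KochTri.instDecidableEq (m : ℕ) : ∀ t, DecidableEq (KochTri m t)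
  | 0 => inferInstanceAs (DecidableEq Unit)
  | t+1 =>
    letI := KochTri.instDecidableEq m t
    inferInstanceAs (DecidableEq (KochTri m t ⊕ (KochTri m t × Fin 3 × Fin m)))

instance KochVertex.instDecidableEq (m : ℕ) : ∀ t, DecidableEq (KochVertex m t)
  | 0 => inferInstanceAs (DecidableEq (Fin 3))
  | t+1 =>
    letI := KochVertex.instDecidableEq m t
    letI := KochTri.instDecidableEq m t
    inferInstanceAs (DecidableEq (KochVertex m t ⊕ (KochTri m t × Fin 3 × Fin m × Fin 2)))

instance KochTri.instFintype (m : ℕ) : ∀ t, Fintype (KochTri m t)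
  | 0 => inferInstanceAs (Fintype Unit)
  | t+1 =>
    letI := KochTri.instFintype m t
    inferInstanceAs (Fintype (KochTri m t ⊕ (KochTri m t × Fin 3 × Fin m)))

instance KochVertex.instFintype (m : ℕ) : ∀ t, Fintype (KochVertex m t)
  | 0 => inferInstanceAs (Fintype (Fin 3))
  | t+1 =>
    letI := KochVertex.instFintype m t
    letI := KochTri.instFintype m t
    inferInstanceAs (Fintype (KochVertex m t ⊕ (KochTri m t × Fin 3 × Fin m × Fin 2)))

/-- The Koch network `K_{m,t}`: two distinct vertices are adjacent iff they are corners of a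
common triangle. -/
def KochGraph (m t : ℕ) : SimpleGraph (KochVertex m t) where
  Adj u v := u ≠ v ∧ ∃ (τ : KochTri m t) (i j : Fin 3),
      KochCorner m t τ i = u ∧ KochCorner m t τ j = v
  symm := ⟨by rintro u v ⟨hne, τ, i, j, hi, hj⟩; exact ⟨hne.symm, τ, j, i, hj, hi⟩⟩
  loopless := ⟨by rintro u ⟨hne, -⟩; exact hne rfl⟩

instance (m t : ℕ) : DecidableRel (KochGraph m t).Adj := fun u v =>
  inferInstanceAs (Decidable (u ≠ v ∧ ∃ (τ : KochTri m t) (i j : Fin 3),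
      KochCorner m t τ i = u ∧ KochCorner m t τ j = v))

/-- The step at which a vertex of `K_{m,t}` was added (initial vertices are added at step 0). -/
def KochBirth (m : ℕ) : ∀ t, KochVertex m t → ℕ
  | 0, _ => 0
  | t+1, Sum.inl v => KochBirth m t v
  | t+1, Sum.inr _ => t+1

/-- The canonical inclusion of `K_{m,t}` into `K_{m,t+1}`. -/
def KochInl (m t : ℕ) (v : KochVertex m t) : KochVertex m (t+1) := Sum.inl v

/-- The other member of the group of two with which a (non-initial) vertex was added. -/
def KochSibling (m : ℕ) : ∀ t, KochVertex m t → KochVertex m t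
  | 0, v => v
  | t+1, Sum.inl v => Sum.inl (KochSibling m t v)
  | t+1, Sum.inr (τ, c, g, p) => Sum.inr (τ, c, g, if p = 0 then 1 else 0)

/-- The father vertex of a (non-initial) vertex: the existing vertex to which its group of two
was attached. -/
def KochFather (m : ℕ) : ∀ t, KochVertex m t → KochVertex m t
  | 0, v => v
  | t+1, Sum.inl v => Sum.inl (KochFather m t v)
  | t+1, Sum.inr (τ, c, _, _) => Sum.inl (KochCorner m t τ c)

/-!
Every edge `uv` of `K_{m,t}` lies in exactly one triangle, so each neighbour `u` of a vertex `v`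
has exactly one common neighbour with `v`: the edges among the neighbours of `v` form a perfect
matching of them, and there are `deg v / 2` of them. The property survives each step of the
construction because a new vertex has exactly two neighbours, its father and its sibling, which
are adjacent, while two old vertices gain no new common neighbour.
-/

namespace SimpleGraph

open Finset

variable {V : Type*} (G : SimpleGraph V)

theorem existsUnique_commonNeighbor_of_neighborSet_eq_pair {u v a b : V}
    (hu : G.neighborSet u = {a, b}) (hab : G.Adj a b) (huv : G.Adj u v) :
    ∃! w, G.Adj u w ∧ G.Adj v w := by
  have hnbr : ∀ w, G.Adj u w ↔ w = a ∨ w = b := fun w => by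
    rw [← mem_neighborSet, hu, Set.mem_insert_iff, Set.mem_singleton_iff]
  rcases (hnbr v).1 huv with rfl | rfl
  · refine ⟨b, ⟨(hnbr b).2 (.inr rfl), hab⟩, fun w ⟨huw, hvw⟩ => ?_⟩
    exact ((hnbr w).1 huw).resolve_left (G.ne_of_adj hvw).symm
  · refine ⟨a, ⟨(hnbr a).2 (.inl rfl), hab.symm⟩, fun w ⟨huw, hvw⟩ => ?_⟩
    exact ((hnbr w).1 huw).resolve_right (G.ne_of_adj hvw).symm

variable [Fintype V] [DecidableRel G.Adj]

def edgesAmongNeighbors (v : V) : Finset (Finset V) :=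
  ((G.neighborFinset v).powersetCard 2).filter fun s => ∃ x ∈ s, ∃ y ∈ s, G.Adj x y

noncomputable def localClustering (v : V) : ℝ :=
  #(G.edgesAmongNeighbors v) / ((G.degree v : ℝ) * ((G.degree v : ℝ) - 1) / 2)

theorem localClustering_eq_of_two_mul_card_eq_degree {v : V}
    (h : 2 * #(G.edgesAmongNeighbors v) = G.degree v) (hv : G.degree v ≠ 0) :
    G.localClustering v = 1 / ((G.degree v : ℝ) - 1) := by
  have he : (#(G.edgesAmongNeighbors v) : ℝ) ≠ 0 := by
    exact_mod_cast fun he => hv (by rw [← h, he])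
  rw [localClustering, ← h]
  push_cast
  field_simp

theorem card_adjPairs_neighborFinset_eq_degree {v : V}
    (h : ∀ u, G.Adj v u → ∃! w, G.Adj v w ∧ G.Adj u w) :
    #{q ∈ G.neighborFinset v ×ˢ G.neighborFinset v | G.Adj q.1 q.2} = G.degree v := by
  rw [card_filter, sum_product, ← card_neighborFinset_eq_degree, ← mul_one #(G.neighborFinset v)]
  refine sum_const_nat fun u hu => ?_
  rw [← card_filter, card_eq_one]
  obtain ⟨w, hw, huniq⟩ := h u ((G.mem_neighborFinset v u).1 hu)
  refine ⟨w, eq_singleton_iff_unique_mem.2 ⟨?_, fun w' hw' => huniq w' ?_⟩⟩ <;> simp_all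

theorem two_mul_card_edgesAmongNeighbors [DecidableEq V] (v : V) :
    2 * #(G.edgesAmongNeighbors v) =
      #{q ∈ G.neighborFinset v ×ˢ G.neighborFinset v | G.Adj q.1 q.2} := by
  have hmaps : ∀ q ∈ {q ∈ G.neighborFinset v ×ˢ G.neighborFinset v | G.Adj q.1 q.2},
      ({q.1, q.2} : Finset V) ∈ G.edgesAmongNeighbors v := by
    rintro ⟨x, y⟩ hq
    simp only [mem_filter, mem_product] at hq
    simp only [edgesAmongNeighbors, mem_filter, mem_powersetCard]
    exact ⟨⟨insert_subset hq.1.1 (singleton_subset_iff.2 hq.1.2), card_pair (G.ne_of_adj hq.2)⟩,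
      x, by simp, y, by simp, hq.2⟩
  rw [card_eq_sum_card_fiberwise hmaps, mul_comm, sum_const_nat]
  intro s hs
  simp only [edgesAmongNeighbors, mem_filter, mem_powersetCard] at hs
  obtain ⟨⟨hsub, hcard⟩, x, hx, y, hy, hxy⟩ := hs
  obtain rfl : s = {x, y} := (eq_of_subset_of_card_le (insert_subset hx (singleton_subset_iff.2 hy))
    (by rw [hcard, card_pair (G.ne_of_adj hxy)])).symm
  have hfiber : {q ∈ {q ∈ G.neighborFinset v ×ˢ G.neighborFinset v | G.Adj q.1 q.2} |
      ({q.1, q.2} : Finset V) = {x, y}} = {(x, y), (y, x)} := by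
    ext ⟨a, b⟩
    simp only [mem_filter, mem_product, mem_insert, mem_singleton, Prod.mk.injEq]
    constructor
    · rintro ⟨⟨-, hab⟩, hpair⟩
      have ha : a ∈ ({x, y} : Finset V) := hpair ▸ mem_insert_self a {b}
      have hb : b ∈ ({x, y} : Finset V) := hpair ▸ mem_insert_of_mem (mem_singleton_self b)
      simp only [mem_insert, mem_singleton] at ha hb
      rcases ha with rfl | rfl <;> rcases hb with rfl | rfl <;> simp_all
    · rintro (⟨rfl, rfl⟩ | ⟨rfl, rfl⟩)
      · exact ⟨⟨⟨hsub (by simp), hsub (by simp)⟩, hxy⟩, rfl⟩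
      · exact ⟨⟨⟨hsub (by simp), hsub (by simp)⟩, hxy.symm⟩, pair_comm _ _⟩
  rw [hfiber, card_pair (by simp [G.ne_of_adj hxy])]

end SimpleGraph

-- Lets `simp` see vertices and triangles of `K_{m,t+1}` as sums and use `Sum.inl.injEq` etc.
attribute [reducible] KochVertex KochTri

namespace KochGraph

variable {m t : ℕ}

theorem adj_zero_iff {u w : KochVertex m 0} : (KochGraph m 0).Adj u w ↔ u ≠ w :=
  ⟨fun h => h.1, fun h => ⟨h, (), u, w, rfl, rfl⟩⟩

theorem neighborSet_zero (v : KochVertex m 0) :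
    (KochGraph m 0).neighborSet v = {v + 1, v + 2} := by
  ext w
  simp only [SimpleGraph.mem_neighborSet, adj_zero_iff, Set.mem_insert_iff, Set.mem_singleton_iff]
  exact (by decide : ∀ v w : Fin 3, v ≠ w ↔ w = v + 1 ∨ w = v + 2) v w

theorem adj_inl_inl {a b : KochVertex m t} :
    (KochGraph m (t+1)).Adj (Sum.inl a) (Sum.inl b) ↔ (KochGraph m t).Adj a b := by
  constructor
  · rintro ⟨hne, τ | ⟨τ, c, g⟩, i, j, hi, hj⟩
    · exact ⟨fun h => hne (congrArg _ h), τ, i, j, Sum.inl_injective hi, Sum.inl_injective hj⟩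
    · fin_cases i <;> fin_cases j <;> simp_all [KochCorner]
  · rintro ⟨hne, τ, i, j, hi, hj⟩
    exact ⟨by simpa using hne, Sum.inl τ, i, j, by simp [KochCorner, hi], by simp [KochCorner, hj]⟩

theorem adj_inr_iff {x : KochTri m t × Fin 3 × Fin m × Fin 2} {w : KochVertex m (t+1)} :
    (KochGraph m (t+1)).Adj (Sum.inr x) w ↔
      w = KochFather m (t+1) (Sum.inr x) ∨ w = KochSibling m (t+1) (Sum.inr x) := by
  obtain ⟨τ, c, g, p⟩ := x
  constructor
  · rintro ⟨hne, τ' | ⟨τ', c', g'⟩, i, j, hi, hj⟩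
    · simp [KochCorner] at hi
    · fin_cases i <;> fin_cases j <;> fin_cases p <;> simp_all [KochCorner, KochFather, KochSibling]
  · rintro (rfl | rfl)
    · refine ⟨by simp [KochFather], Sum.inr (τ, c, g), if p = 0 then 1 else 2, 0, ?_, rfl⟩
      fin_cases p <;> rfl
    · refine ⟨by fin_cases p <;> simp [KochSibling], Sum.inr (τ, c, g), if p = 0 then 1 else 2,
        if p = 0 then 2 else 1, ?_, ?_⟩ <;> fin_cases p <;> rfl

theorem neighborSet_inr (x : KochTri m t × Fin 3 × Fin m × Fin 2) :
    (KochGraph m (t+1)).neighborSet (Sum.inr x) =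
      {KochFather m (t+1) (Sum.inr x), KochSibling m (t+1) (Sum.inr x)} :=
  Set.ext fun _ => adj_inr_iff

theorem adj_father_sibling (x : KochTri m t × Fin 3 × Fin m × Fin 2) :
    (KochGraph m (t+1)).Adj (KochFather m (t+1) (Sum.inr x))
      (KochSibling m (t+1) (Sum.inr x)) := by
  obtain ⟨τ, c, g, p⟩ := x
  rw [SimpleGraph.adj_comm]
  fin_cases p <;> simp [adj_inr_iff, KochFather, KochSibling]

theorem adj_inl_inr_iff {a : KochVertex m t} {x : KochTri m t × Fin 3 × Fin m × Fin 2} :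
    (KochGraph m (t+1)).Adj (Sum.inl a) (Sum.inr x) ↔ a = KochCorner m t x.1 x.2.1 := by
  rw [SimpleGraph.adj_comm, adj_inr_iff]
  simp [KochFather, KochSibling]

theorem exists_adj : ∀ {t} (v : KochVertex m t), ∃ u, (KochGraph m t).Adj v u
  | 0, v => ⟨v + 1, adj_zero_iff.2 ((by decide : ∀ v : Fin 3, v ≠ v + 1) v)⟩
  | _ + 1, Sum.inl a => by
    obtain ⟨b, hab⟩ := exists_adj a
    exact ⟨Sum.inl b, adj_inl_inl.2 hab⟩
  | _ + 1, Sum.inr _ => ⟨_, adj_inr_iff.2 (.inl rfl)⟩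

theorem existsUnique_commonNeighbor :
    ∀ {t} {v u : KochVertex m t}, (KochGraph m t).Adj v u →
      ∃! w, (KochGraph m t).Adj v w ∧ (KochGraph m t).Adj u w
  | 0, v, _, h => SimpleGraph.existsUnique_commonNeighbor_of_neighborSet_eq_pair _
      (neighborSet_zero v) (adj_zero_iff.2 ((by decide : ∀ v : Fin 3, v + 1 ≠ v + 2) v)) h
  | _ + 1, Sum.inr x, _, h => SimpleGraph.existsUnique_commonNeighbor_of_neighborSet_eq_pair _
      (neighborSet_inr x) (adj_father_sibling x) h
  | _ + 1, Sum.inl _, Sum.inr x, h => by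
    simpa only [and_comm] using SimpleGraph.existsUnique_commonNeighbor_of_neighborSet_eq_pair _
      (neighborSet_inr x) (adj_father_sibling x) h.symm
  | _ + 1, Sum.inl _, Sum.inl _, h => by
    obtain ⟨c, hc, huniq⟩ := existsUnique_commonNeighbor (adj_inl_inl.1 h)
    refine ⟨Sum.inl c, by simpa only [adj_inl_inl] using hc, ?_⟩
    rintro (c' | x) hw
    · rw [huniq c' (by simpa only [adj_inl_inl] using hw)]
    · simp only [adj_inl_inr_iff] at hw
      exact absurd (hw.1.trans hw.2.symm) (adj_inl_inl.1 h).ne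

end KochGraph

theorem koch_clustering_general (m t : ℕ) (v : KochVertex m t) :
    2 * ((((KochGraph m t).neighborFinset v).powersetCard 2).filter fun s =>
          ∃ x ∈ s, ∃ y ∈ s, (KochGraph m t).Adj x y).card = (KochGraph m t).degree v
    ∧ (((((KochGraph m t).neighborFinset v).powersetCard 2).filter fun s =>
          ∃ x ∈ s, ∃ y ∈ s, (KochGraph m t).Adj x y).card : ℝ) /
        (((KochGraph m t).degree v : ℝ) * (((KochGraph m t).degree v : ℝ) - 1) / 2)
      = 1 / (((KochGraph m t).degree v : ℝ) - 1) := by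
  have hcount : 2 * ((KochGraph m t).edgesAmongNeighbors v).card = (KochGraph m t).degree v := by
    rw [SimpleGraph.two_mul_card_edgesAmongNeighbors,
      SimpleGraph.card_adjPairs_neighborFinset_eq_degree _
        fun _ => KochGraph.existsUnique_commonNeighbor]
  have hdeg : (KochGraph m t).degree v ≠ 0 :=
    ((KochGraph m t).degree_pos_iff_exists_adj v).2 (KochGraph.exists_adj v) |>.ne'
  exact ⟨hcount, (KochGraph m t).localClustering_eq_of_two_mul_card_eq_degree hcount hdeg⟩

/-- For all integers m ≥ 1 and t ≥ 0, every vertex of the Koch network `K_{m,t}`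
of degree k has local clustering coefficient exactly `1/(k-1)`: the number of edges among its
k neighbors equals `k/2` (stated as twice that number equals `k`), so that `(k/2)` divided by
`k(k-1)/2` equals `1/(k-1)`. -/
theorem koch_clustering (m t : ℕ) (hm : 1 ≤ m) (v : KochVertex m t) :
    2 * ((((KochGraph m t).neighborFinset v).powersetCard 2).filter fun s =>
          ∃ x ∈ s, ∃ y ∈ s, (KochGraph m t).Adj x y).card = (KochGraph m t).degree v
    ∧ (((((KochGraph m t).neighborFinset v).powersetCard 2).filter fun s =>
          ∃ x ∈ s, ∃ y ∈ s, (KochGraph m t).Adj x y).card : ℝ) /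
        (((KochGraph m t).degree v : ℝ) * (((KochGraph m t).degree v : ℝ) - 1) / 2)
      = 1 / (((KochGraph m t).degree v : ℝ) - 1) :=
  koch_clustering_general m t v
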